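/- arXiv:2305.13187 — 2 statements merged into one kernel-verified Lean document; each statement's English description precedes it below -/
import Mathlib

section
/- Let f₁, …, f_n : ℝ^d → ℝ each be convex and G_∞-Lipschitz with respect to the ℓ_1-norm (so all subgradients satisfy ‖g‖_∞ ≤ G_∞), and let f = (1/n)Σᵢ fᵢ with minimizer x_*. Consider the iteration x_{t+1} = x_t - γ·sign(g_t + G_∞ U_t), where g_t is a subgradient of f_{i_t} at x_t with i_t uniform on {1,…,n}, and U_t ~ Uniform([-1,1]^d) independent of (x_t, i_t). Then for any γ > 0 and T ≥ 1: Σ_{t=1}^T E[f(x_t) - f(x_*)] ≤ (G_∞/2)·(‖x_1 - x_*‖²/γ + γ d T). Consequently, with γ = ‖x_1 - x_*‖/√(dT), the average iterate x̄_T = (1/T)Σ_{t≤T} x_t satisfies E[f(x̄_T)] - f(x_*) ≤ G_∞‖x_1 - x_*‖·√(d/T). -/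
open MeasureTheory ProbabilityTheory
open scoped RealInnerProductSpace

/-- The ℓ_p norm on `ℝ^d` (for finite `p ≥ 1`). -/
noncomputable def lpNorm {d : ℕ} (p : ℝ) (x : Fin d → ℝ) : ℝ :=
  (∑ j, |x j| ^ p) ^ (1 / p)

/-- The uniform distribution on `[-1, 1]`. -/
noncomputable def unifIcc : Measure ℝ :=
  (2 : ENNReal)⁻¹ • (volume.restrict (Set.Icc (-1 : ℝ) 1))

/-- The uniform distribution on the cube `[-1, 1]^d`. -/
noncomputable def unifBox (d : ℕ) : Measure (Fin d → ℝ) :=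
  Measure.pi fun _ => unifIcc

/-- The uniform distribution on `{1, …, n}`. -/
noncomputable def unifFin (n : ℕ) : Measure (Fin n) :=
  (n : ENNReal)⁻¹ • Measure.count

lemma ssgd_measurable_sign : Measurable Real.sign := by
  have : Real.sign = fun r : ℝ => if r < 0 then (-1:ℝ) else if 0 < r then 1 else 0 :=
    funext fun r => rfl
  rw [this]
  exact Measurable.ite measurableSet_Iio measurable_const
    (Measurable.ite measurableSet_Ioi measurable_const measurable_const)

lemma ssgd_abs_sign_le (r : ℝ) : |Real.sign r| ≤ 1 := by
  rcases Real.sign_apply_eq r with h | h | h <;> rw [h] <;> norm_num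

lemma ssgd_sign_sq_le (r : ℝ) : Real.sign r ^ 2 ≤ 1 := by
  rcases Real.sign_apply_eq r with h | h | h <;> rw [h] <;> norm_num

instance : IsProbabilityMeasure unifIcc := by
  constructor
  rw [unifIcc]
  simp [Measure.restrict_apply, Real.volume_Icc]
  rw [show (1:ℝ) + 1 = 2 by norm_num, show ENNReal.ofReal 2 = 2 by norm_num]
  simp [ENNReal.inv_mul_cancel]

instance (d : ℕ) : IsProbabilityMeasure (unifBox d) := by
  rw [unifBox]; infer_instance

lemma ssgd_unifFin_prob (n : ℕ) (hn : 0 < n) : IsProbabilityMeasure (unifFin n) := by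
  constructor
  rw [unifFin]
  simp [Measure.count_univ]
  rw [ENNReal.inv_mul_cancel] <;> simp [hn.ne']

lemma ssgd_unifBox_map_eval (d : ℕ) (j : Fin d) :
    (unifBox d).map (Function.eval j) = unifIcc := by
  ext s hs
  rw [Measure.map_apply (measurable_pi_apply j) hs]
  have hpre : Function.eval j ⁻¹' s
      = Set.pi Set.univ (Function.update (fun _ : Fin d => (Set.univ : Set ℝ)) j s) := by
    ext u
    simp only [Set.mem_preimage, Set.mem_univ_pi, Function.eval]
    constructor
    · intro h i
      rcases eq_or_ne i j with rfl | hij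
      · simpa using h
      · simp [Function.update_of_ne hij]
    · intro h
      have := h j
      simpa using this
  rw [hpre, unifBox, Measure.pi_pi]
  rw [Finset.prod_eq_single j]
  · simp
  · intro b _ hb
    simp [Function.update_of_ne hb]
  · simp

lemma ssgd_integral_sign_Icc {a G : ℝ} (hG : 0 < G) (ha : |a| ≤ G) :
    ∫ y, Real.sign (a + G * y) ∂unifIcc = a / G := by
  obtain ⟨ha1, ha2⟩ := abs_le.1 ha
  set c : ℝ := -a / G with hc
  have hc1 : -1 ≤ c := by rw [hc, le_div_iff₀ hG]; linarith
  have hc2 : c ≤ 1 := by rw [hc, div_le_iff₀ hG]; linarith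
  have hmeas : Measurable fun y : ℝ => Real.sign (a + G * y) :=
    ssgd_measurable_sign.comp (measurable_const.add (measurable_const.mul measurable_id))
  have hio : ∀ s : Set ℝ, MeasurableSet s → volume s < ⊤ →
      IntegrableOn (fun y => Real.sign (a + G * y)) s := by
    intro s hs hfin
    refine Integrable.mono' (integrableOn_const (C := (1:ℝ)) hfin.ne)
      hmeas.aestronglyMeasurable (Filter.Eventually.of_forall fun y => ssgd_abs_sign_le _)
  have key : ∫ y in Set.Icc (-1 : ℝ) 1, Real.sign (a + G * y) = 2 * (a / G) := by
    rw [integral_Icc_eq_integral_Ioc,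
      ← Set.Ioc_union_Ioc_eq_Ioc hc1 hc2,
      setIntegral_union (Set.Ioc_disjoint_Ioc_of_le le_rfl) measurableSet_Ioc
        (hio _ measurableSet_Ioc (by simp)) (hio _ measurableSet_Ioc (by simp))]
    have h1 : ∫ y in Set.Ioc c 1, Real.sign (a + G * y) = 1 - c := by
      rw [setIntegral_congr_fun measurableSet_Ioc (g := fun _ => (1:ℝ))
        (fun y hy => Real.sign_of_pos (by
          have : G * c < G * y := by exact mul_lt_mul_of_pos_left hy.1 hG
          rw [hc] at this
          rw [mul_div_cancel₀ _ hG.ne'] at this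
          linarith))]
      rw [setIntegral_const, measureReal_def, Real.volume_Ioc,
        ENNReal.toReal_ofReal (show (0:ℝ) ≤ 1 - c by linarith), smul_eq_mul, mul_one]
    have h2 : ∫ y in Set.Ioc (-1 : ℝ) c, Real.sign (a + G * y) = -(c + 1) := by
      rw [integral_Ioc_eq_integral_Ioo,
        setIntegral_congr_fun measurableSet_Ioo (g := fun _ => (-1:ℝ))
        (fun y hy => Real.sign_of_neg (by
          have : G * y < G * c := mul_lt_mul_of_pos_left hy.2 hG
          rw [hc, mul_div_cancel₀ _ hG.ne'] at this
          linarith))]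
      rw [setIntegral_const, measureReal_def, Real.volume_Ioo,
        ENNReal.toReal_ofReal (show (0:ℝ) ≤ c - -1 by linarith), smul_eq_mul]
      ring
    rw [h1, h2, hc]
    field_simp
    ring
  rw [unifIcc, integral_smul_measure, key, ENNReal.toReal_inv, ENNReal.toReal_ofNat,
    smul_eq_mul]
  ring

lemma ssgd_integral_sign_box {d : ℕ} (j : Fin d) {a G : ℝ} (hG : 0 < G) (ha : |a| ≤ G) :
    ∫ u, Real.sign (a + G * u j) ∂(unifBox d) = a / G := by
  have hmeas : Measurable fun y : ℝ => Real.sign (a + G * y) :=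
    ssgd_measurable_sign.comp (measurable_const.add (measurable_const.mul measurable_id))
  have h2 : ∫ y, Real.sign (a + G * y) ∂((unifBox d).map (Function.eval j))
      = ∫ u, Real.sign (a + G * (Function.eval j u)) ∂(unifBox d) :=
    integral_map (measurable_pi_apply j).aemeasurable
      (by rw [ssgd_unifBox_map_eval]; exact hmeas.aestronglyMeasurable)
  exact h2.symm.trans (by rw [ssgd_unifBox_map_eval]; exact ssgd_integral_sign_Icc hG ha)

lemma ssgd_integral_phi {d n : ℕ} (hn : 0 < n) {G : ℝ} (hG : 0 < G)
    (a : Fin n → Fin d → ℝ) (c : Fin d → ℝ) (ha : ∀ k j, |a k j| ≤ G) :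
    ∫ p : Fin n × (Fin d → ℝ), (∑ j, Real.sign (a p.1 j + G * p.2 j) * c j)
      ∂((unifFin n).prod (unifBox d))
      = (n : ℝ)⁻¹ * ∑ k, ∑ j, a k j / G * c j := by
  haveI := ssgd_unifFin_prob n hn
  have hmeas : Measurable fun p : Fin n × (Fin d → ℝ) =>
      ∑ j, Real.sign (a p.1 j + G * p.2 j) * c j := by
    refine Finset.measurable_sum _ fun j _ => Measurable.mul_const ?_ _
    exact ssgd_measurable_sign.comp
      (((measurable_of_finite (fun k => a k j)).comp measurable_fst).add
        (measurable_const.mul ((measurable_pi_apply j).comp measurable_snd)))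
  have hint : Integrable (fun p : Fin n × (Fin d → ℝ) =>
      ∑ j, Real.sign (a p.1 j + G * p.2 j) * c j) ((unifFin n).prod (unifBox d)) := by
    refine Integrable.mono' (integrable_const (∑ j, |c j|)) hmeas.aestronglyMeasurable
      (Filter.Eventually.of_forall fun p => ?_)
    calc |∑ j, Real.sign (a p.1 j + G * p.2 j) * c j|
        ≤ ∑ j, |Real.sign (a p.1 j + G * p.2 j) * c j| := Finset.abs_sum_le_sum_abs _ _
      _ ≤ ∑ j, |c j| := by
          refine Finset.sum_le_sum fun j _ => ?_
          rw [abs_mul]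
          exact mul_le_of_le_one_left (abs_nonneg _) (ssgd_abs_sign_le _)
  rw [integral_prod _ hint]
  have hinner : ∀ k : Fin n, ∫ u, (∑ j, Real.sign (a k j + G * u j) * c j) ∂(unifBox d)
      = ∑ j, a k j / G * c j := by
    intro k
    rw [integral_finset_sum]
    · exact Finset.sum_congr rfl fun j _ => by
        rw [integral_mul_const, ssgd_integral_sign_box j hG (ha k j)]
    · intro j _
      refine Integrable.mono' (integrable_const |c j|) ?_
        (Filter.Eventually.of_forall fun u => ?_)
      · exact ((ssgd_measurable_sign.comp (measurable_const.add
          (measurable_const.mul (measurable_pi_apply j)))).mul_const _).aestronglyMeasurable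
      · rw [Real.norm_eq_abs, abs_mul]
        exact mul_le_of_le_one_left (abs_nonneg _) (ssgd_abs_sign_le _)
  simp_rw [hinner]
  rw [unifFin, integral_smul_measure, integral_fintype (Integrable.of_finite)]
  simp [ENNReal.toReal_inv, Finset.mul_sum]


lemma ssgd_phi_meas {d n : ℕ} (G : ℝ) (sgv : Fin n → Fin d → ℝ) (c : Fin d → ℝ) :
    Measurable fun p : Fin n × (Fin d → ℝ) => ∑ j, Real.sign (sgv p.1 j + G * p.2 j) * c j := by
  refine Finset.measurable_sum _ fun j _ => Measurable.mul_const ?_ _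
  exact ssgd_measurable_sign.comp
    (((measurable_of_finite (fun k => sgv k j)).comp measurable_fst).add
      (measurable_const.mul ((measurable_pi_apply j).comp measurable_snd)))

lemma ssgd_phi_bound {d n : ℕ} (G : ℝ) (sgv : Fin n → Fin d → ℝ) (c : Fin d → ℝ)
    (p : Fin n × (Fin d → ℝ)) :
    |∑ j, Real.sign (sgv p.1 j + G * p.2 j) * c j| ≤ ∑ j, |c j| := by
  calc |∑ j, Real.sign (sgv p.1 j + G * p.2 j) * c j|
      ≤ ∑ j, |Real.sign (sgv p.1 j + G * p.2 j) * c j| := Finset.abs_sum_le_sum_abs _ _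
    _ ≤ ∑ j, |c j| := by
        refine Finset.sum_le_sum fun j _ => ?_
        rw [abs_mul]
        exact mul_le_of_le_one_left (abs_nonneg _) (ssgd_abs_sign_le _)


set_option maxHeartbeats 4000000 in
/-- Convergence of SignSGD+ (`x_{t+1} = x_t - γ sign(g_t + G∞ U_t)`) on a finite sum of
convex functions that are `G∞`-Lipschitz w.r.t. the ℓ₁-norm: the regret bound
`Σ_{t=1}^T E[f(x_t) - f(x_*)] ≤ (G∞/2)(‖x_1 - x_*‖²/γ + γ d T)` holds for any `γ > 0`,
and with `γ = ‖x_1 - x_*‖/√(dT)` the averaged iterate satisfies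
`E[f(x̄_T)] - f(x_*) ≤ G∞ ‖x_1 - x_*‖ √(d/T)`. -/
theorem signSGDplus_convergence {d n : ℕ} (hd : 0 < d) (hn : 0 < n)
    {Ω : Type*} [MeasurableSpace Ω] (μ : Measure Ω) [IsProbabilityMeasure μ]
    (Ginf γ : ℝ) (hG : 0 < Ginf) (hγ : 0 < γ)
    (fs : Fin n → EuclideanSpace ℝ (Fin d) → ℝ)
    (hconv : ∀ i, ConvexOn ℝ Set.univ (fs i))
    (hlip : ∀ i x y, |fs i x - fs i y| ≤ Ginf * lpNorm 1 (x - y))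
    (f : EuclideanSpace ℝ (Fin d) → ℝ)
    (hf : f = fun x => (1 / n : ℝ) * ∑ i, fs i x)
    (xstar : EuclideanSpace ℝ (Fin d)) (hxstar : ∀ y, f xstar ≤ f y)
    -- deterministic subgradient selection: `sg i x ∈ ∂(fs i)(x)`
    (sg : Fin n → EuclideanSpace ℝ (Fin d) → EuclideanSpace ℝ (Fin d))
    (hsub : ∀ i x y, fs i x + ⟪sg i x, y - x⟫ ≤ fs i y)
    (x : ℕ → Ω → EuclideanSpace ℝ (Fin d))
    (x1 : EuclideanSpace ℝ (Fin d)) (hx1 : ∀ ω, x 1 ω = x1)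
    (i : ℕ → Ω → Fin n) (U : ℕ → Ω → Fin d → ℝ)
    (hxmeas : ∀ t, Measurable (x t)) (himeas : ∀ t, Measurable (i t))
    (hUmeas : ∀ t, Measurable (U t))
    -- the iteration
    (hrec : ∀ t ω j, x (t + 1) ω j =
      x t ω j - γ * Real.sign (sg (i t ω) (x t ω) j + Ginf * U t ω j))
    -- `i_t` uniform on `{1,…,n}`, `U_t` uniform on `[-1,1]^d`, mutually independent
    (hlaw : ∀ t, Measure.map (fun ω => (i t ω, U t ω)) μ = (unifFin n).prod (unifBox d))
    -- and `(i_t, U_t)` independent of the current iterate `x_t`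
    (hindep : ∀ t, IndepFun (fun ω => (i t ω, U t ω)) (x t) μ)
    (hint : ∀ t, Integrable (fun ω => f (x t ω)) μ)
    (T : ℕ) (hT : 1 ≤ T) :
    (∑ t ∈ Finset.Icc 1 T, ∫ ω, (f (x t ω) - f xstar) ∂μ)
        ≤ Ginf / 2 * (‖x1 - xstar‖ ^ 2 / γ + γ * d * T) ∧
    (γ = ‖x1 - xstar‖ / Real.sqrt (d * T) →
      (∫ ω, f ((T : ℝ)⁻¹ • ∑ t ∈ Finset.Icc 1 T, x t ω) ∂μ) - f xstar
        ≤ Ginf * ‖x1 - xstar‖ * Real.sqrt (d / T)) := by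
  classical
  have hnR : (0:ℝ) < n := by exact_mod_cast hn
  have hTR : (0:ℝ) < T := by exact_mod_cast hT
  have hinner : ∀ a b : EuclideanSpace ℝ (Fin d), ⟪a, b⟫ = ∑ j, a j * b j := by
    intro a b
    simp [PiLp.inner_apply, RCLike.inner_apply, conj_trivial]
    exact Finset.sum_congr rfl fun j _ => mul_comm _ _
  have hlp1 : ∀ z : EuclideanSpace ℝ (Fin d), lpNorm 1 z = ∑ j, |z j| := by
    intro z
    simp [_root_.lpNorm, Real.rpow_one]
  have hsgb : ∀ k (v : EuclideanSpace ℝ (Fin d)) j, |sg k v j| ≤ Ginf := by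
    intro k v j
    have key : ∀ s : ℝ, sg k v j * s ≤ Ginf * |s| := by
      intro s
      have h1 := hsub k v (v + EuclideanSpace.single j s)
      have h2 := hlip k (v + EuclideanSpace.single j s) v
      have h3 : (v + EuclideanSpace.single j s) - v = EuclideanSpace.single j s := by abel
      rw [h3] at h1 h2
      have h4 : ⟪sg k v, EuclideanSpace.single j s⟫ = sg k v j * s := by
        rw [hinner]
        simp [EuclideanSpace.single_apply, mul_ite, mul_zero, Finset.sum_ite_eq']
      have h5 : lpNorm 1 (EuclideanSpace.single j s : EuclideanSpace ℝ (Fin d)) = |s| := by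
        rw [hlp1]
        simp [EuclideanSpace.single_apply, apply_ite abs, abs_zero, Finset.sum_ite_eq']
      rw [h4] at h1
      rw [h5] at h2
      have h6 : fs k (v + EuclideanSpace.single j s) - fs k v ≤ Ginf * |s| :=
        le_trans (le_abs_self _) h2
      linarith
    have k1 := key 1
    have k2 := key (-1)
    rw [abs_one] at k1
    rw [abs_neg, abs_one] at k2
    rw [abs_le]
    constructor <;> nlinarith
  have hflip : ∀ a b : EuclideanSpace ℝ (Fin d), |f a - f b| ≤ Ginf * ∑ j, |a j - b j| := by
    intro a b
    have hab : ∀ i, |fs i a - fs i b| ≤ Ginf * ∑ j, |a j - b j| := by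
      intro k
      have := hlip k a b
      rw [hlp1 (a - b)] at this
      simpa [PiLp.sub_apply] using this
    have h0 : f a - f b = (1/n : ℝ) * ∑ k, (fs k a - fs k b) := by
      rw [hf, Finset.sum_sub_distrib]
      ring
    rw [h0, abs_mul, abs_of_pos (show (0:ℝ) < 1/n by positivity)]
    calc (1/n : ℝ) * |∑ k, (fs k a - fs k b)|
        ≤ (1/n : ℝ) * ∑ k, |fs k a - fs k b| := by
          have := Finset.abs_sum_le_sum_abs (fun k => fs k a - fs k b) Finset.univ
          have hpos : (0:ℝ) ≤ 1/n := by positivity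
          nlinarith [Finset.abs_sum_le_sum_abs (fun k => fs k a - fs k b) (Finset.univ : Finset (Fin n))]
      _ ≤ (1/n : ℝ) * ∑ _k : Fin n, (Ginf * ∑ j, |a j - b j|) := by
          have hpos : (0:ℝ) ≤ 1/n := by positivity
          have := Finset.sum_le_sum fun k (_ : k ∈ Finset.univ) => hab k
          nlinarith
      _ = Ginf * ∑ j, |a j - b j| := by
          rw [Finset.sum_const, Finset.card_univ, Fintype.card_fin, nsmul_eq_mul]
          field_simp
  have hfconv : ConvexOn ℝ Set.univ f := by
    have hsum : ∀ s : Finset (Fin n), ConvexOn ℝ Set.univ (fun v => ∑ k ∈ s, fs k v) := by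
      intro s
      induction s using Finset.induction_on with
      | empty => simpa using convexOn_const (0:ℝ) convex_univ
      | insert a s' hk IH =>
          have := (hconv a).add IH
          rw [show (fun v => ∑ k ∈ insert a s', fs k v) = fs a + fun v => ∑ k ∈ s', fs k v from
            funext fun v => by simp [Finset.sum_insert hk]]
          exact this
    rw [hf]
    have := (hsum Finset.univ).smul (show (0:ℝ) ≤ 1/n by positivity)
    simpa [smul_eq_mul] using this
  have hsr : ∀ r : ℝ, ∃ z : ℤ, |z| ≤ 1 ∧ Real.sign r = z := by
    intro r
    rcases Real.sign_apply_eq r with h | h | h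
    · exact ⟨-1, by norm_num, by rw [h]; norm_num⟩
    · exact ⟨0, by norm_num, by rw [h]; norm_num⟩
    · exact ⟨1, by norm_num, by rw [h]; norm_num⟩
  have hbd : ∀ t : ℕ, 1 ≤ t → ∀ ω j, |x t ω j - x1 j| ≤ γ * ((t:ℝ) - 1) := by
    intro t ht
    induction t, ht using Nat.le_induction with
    | base =>
        intro ω j
        rw [hx1]
        simp
    | succ t ht IH =>
        intro ω j
        have h1 := IH ω j
        have h2 := ssgd_abs_sign_le (sg (i t ω) (x t ω) j + Ginf * U t ω j)
        have h3 : |x (t+1) ω j - x1 j|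
            ≤ |x t ω j - x1 j| + γ * |Real.sign (sg (i t ω) (x t ω) j + Ginf * U t ω j)| := by
          rw [hrec t ω j]
          calc |x t ω j - γ * Real.sign (sg (i t ω) (x t ω) j + Ginf * U t ω j) - x1 j|
              = |(x t ω j - x1 j) + (-(γ * Real.sign (sg (i t ω) (x t ω) j + Ginf * U t ω j)))| := by
                ring_nf
            _ ≤ |x t ω j - x1 j| + |(-(γ * Real.sign (sg (i t ω) (x t ω) j + Ginf * U t ω j)))| :=
                abs_add_le _ _
            _ = |x t ω j - x1 j| + γ * |Real.sign (sg (i t ω) (x t ω) j + Ginf * U t ω j)| := by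
                rw [abs_neg, abs_mul, abs_of_pos hγ]
        have h4 : γ * |Real.sign (sg (i t ω) (x t ω) j + Ginf * U t ω j)| ≤ γ * 1 :=
          mul_le_mul_of_nonneg_left h2 hγ.le
        push_cast
        linarith
  have hfin : ∀ t : ℕ, 1 ≤ t → ∀ ω, ∃ m : Fin d → ℤ,
      (∀ j, |m j| ≤ (t:ℤ)) ∧ ∀ j, x t ω j = x1 j - γ * m j := by
    intro t ht
    induction t, ht using Nat.le_induction with
    | base =>
        intro ω
        exact ⟨0, fun j => by norm_num, fun j => by rw [hx1]; simp⟩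
    | succ t ht IH =>
        intro ω
        obtain ⟨m, hm1, hm2⟩ := IH ω
        choose z hz1 hz2 using fun j => hsr (sg (i t ω) (x t ω) j + Ginf * U t ω j)
        refine ⟨fun j => m j + z j, fun j => ?_, fun j => ?_⟩
        · calc |m j + z j| ≤ |m j| + |z j| := abs_add_le _ _
            _ ≤ (t:ℤ) + 1 := add_le_add (hm1 j) (hz1 j)
            _ = ((t+1 : ℕ) : ℤ) := by push_cast; ring
        · rw [hrec t ω j, hm2 j, hz2 j]
          push_cast
          ring
  have hDint : ∀ t : ℕ, 1 ≤ t → Integrable (fun ω => ∑ j, (x t ω j - xstar j)^2) μ := by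
    intro t ht
    have hmeas : Measurable fun ω => ∑ j, (x t ω j - xstar j)^2 := by
      refine Finset.measurable_sum _ fun j _ => ?_
      exact (((measurable_pi_apply j).comp ((WithLp.measurable_ofLp _ _).comp (hxmeas t))).sub measurable_const).pow_const 2
    refine Integrable.mono' (integrable_const (∑ j, (γ * ((t:ℝ) - 1) + |x1 j - xstar j|)^2))
      hmeas.aestronglyMeasurable (Filter.Eventually.of_forall fun ω => ?_)
    rw [Real.norm_eq_abs, abs_of_nonneg (Finset.sum_nonneg fun j _ => sq_nonneg _)]
    refine Finset.sum_le_sum fun j _ => ?_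
    rw [← sq_abs]
    have h1 : |x t ω j - xstar j| ≤ γ * ((t:ℝ) - 1) + |x1 j - xstar j| := by
      calc |x t ω j - xstar j| = |(x t ω j - x1 j) + (x1 j - xstar j)| := by ring_nf
        _ ≤ |x t ω j - x1 j| + |x1 j - xstar j| := abs_add_le _ _
        _ ≤ γ * ((t:ℝ) - 1) + |x1 j - xstar j| := by
            have := hbd t ht ω j
            linarith
    have h2 : (0:ℝ) ≤ |x t ω j - xstar j| := abs_nonneg _
    nlinarith
  have hstep : ∀ t : ℕ, 1 ≤ t →
      ∫ ω, (f (x t ω) - f xstar) ∂μ ≤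
        Ginf / (2*γ) * ((∫ ω, (∑ j, (x t ω j - xstar j)^2) ∂μ)
          - (∫ ω, (∑ j, (x (t+1) ω j - xstar j)^2) ∂μ)) + Ginf * γ * (d:ℝ) / 2 := by
    intro t ht
    set F : Finset (EuclideanSpace ℝ (Fin d)) :=
      Finset.image (fun m : Fin d → ℤ => (WithLp.toLp 2 (fun j => x1 j - γ * m j) : EuclideanSpace ℝ (Fin d)))
        (Fintype.piFinset fun _ => Finset.Icc (-(t:ℤ)) (t:ℤ)) with hFdef
    have hmemF : ∀ ω, x t ω ∈ F := by
      intro ω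
      obtain ⟨m, hm1, hm2⟩ := hfin t ht ω
      refine Finset.mem_image.2 ⟨m, ?_, ?_⟩
      · exact Fintype.mem_piFinset.2 fun j =>
          Finset.mem_Icc.2 ⟨neg_le_of_abs_le (hm1 j), le_of_abs_le (hm1 j)⟩
      · ext j
        exact (hm2 j).symm
    have hPmeas : Measurable fun ω => (i t ω, U t ω) := (himeas t).prodMk (hUmeas t)
    have hψmeas : ∀ v : EuclideanSpace ℝ (Fin d),
        Measurable fun y : EuclideanSpace ℝ (Fin d) => (if y = v then (1:ℝ) else 0) :=
      fun v => Measurable.ite (measurableSet_eq) measurable_const measurable_const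
    have hpre : ∀ v : EuclideanSpace ℝ (Fin d), MeasurableSet (x t ⁻¹' {v}) :=
      fun v => (hxmeas t) (measurableSet_singleton v)
    have hψeq : ∀ v : EuclideanSpace ℝ (Fin d), (fun ω => if x t ω = v then (1:ℝ) else 0)
        = Set.indicator (x t ⁻¹' {v}) (fun _ => (1:ℝ)) := by
      intro v
      funext ω
      simp [Set.indicator_apply]
    have hψint : ∀ v, Integrable (fun ω => if x t ω = v then (1:ℝ) else 0) μ := by
      intro v
      rw [hψeq v]
      exact (integrable_const (1:ℝ)).indicator (hpre v)
    have hψval : ∀ v, ∫ ω, (if x t ω = v then (1:ℝ) else 0) ∂μ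
        = (μ (x t ⁻¹' {v})).toReal := by
      intro v
      rw [hψeq v, integral_indicator_const _ (hpre v)]
      simp [Measure.real]
    have hφmeas : ∀ v : EuclideanSpace ℝ (Fin d), Measurable fun p : Fin n × (Fin d → ℝ) =>
        ∑ j, Real.sign (sg p.1 v j + Ginf * p.2 j) * (v j - xstar j) :=
      fun v => ssgd_phi_meas Ginf (fun k => sg k v) (fun j => v j - xstar j)
    have hIφ : ∀ v : EuclideanSpace ℝ (Fin d),
        ∫ ω, (∑ j, Real.sign (sg (i t ω) v j + Ginf * U t ω j) * (v j - xstar j)) ∂μ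
        = (n:ℝ)⁻¹ * ∑ k, ∑ j, sg k v j / Ginf * (v j - xstar j) := by
      intro v
      have hsm : AEStronglyMeasurable (fun p : Fin n × (Fin d → ℝ) =>
          ∑ j, Real.sign (sg p.1 v j + Ginf * p.2 j) * (v j - xstar j))
          (Measure.map (fun ω => (i t ω, U t ω)) μ) := (hφmeas v).aestronglyMeasurable
      calc ∫ ω, (∑ j, Real.sign (sg (i t ω) v j + Ginf * U t ω j) * (v j - xstar j)) ∂μ
          = ∫ p : Fin n × (Fin d → ℝ),
              (∑ j, Real.sign (sg p.1 v j + Ginf * p.2 j) * (v j - xstar j))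
              ∂((unifFin n).prod (unifBox d)) := by
            rw [← hlaw t]
            exact (integral_map hPmeas.aemeasurable hsm).symm
        _ = (n:ℝ)⁻¹ * ∑ k, ∑ j, sg k v j / Ginf * (v j - xstar j) :=
            ssgd_integral_phi hn hG _ _ (fun k j => hsgb k v j)
    have hmul : ∀ v : EuclideanSpace ℝ (Fin d),
        ∫ ω, (∑ j, Real.sign (sg (i t ω) v j + Ginf * U t ω j) * (v j - xstar j))
          * (if x t ω = v then (1:ℝ) else 0) ∂μ
        = (∫ ω, (∑ j, Real.sign (sg (i t ω) v j + Ginf * U t ω j) * (v j - xstar j)) ∂μ)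
          * (μ (x t ⁻¹' {v})).toReal := by
      intro v
      have hind : IndepFun
          (fun ω => ∑ j, Real.sign (sg (i t ω) v j + Ginf * U t ω j) * (v j - xstar j))
          (fun ω => if x t ω = v then (1:ℝ) else 0) μ :=
        (hindep t).comp (hφmeas v) (hψmeas v)
      have h2 := hind.integral_fun_mul_eq_mul_integral ((hφmeas v).comp hPmeas).aestronglyMeasurable
        ((hψmeas v).comp (hxmeas t)).aestronglyMeasurable
      have h3 : ∫ ω, (∑ j, Real.sign (sg (i t ω) v j + Ginf * U t ω j) * (v j - xstar j))
            * (if x t ω = v then (1:ℝ) else 0) ∂μ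
          = (∫ ω, (∑ j, Real.sign (sg (i t ω) v j + Ginf * U t ω j) * (v j - xstar j)) ∂μ)
            * ∫ ω, (if x t ω = v then (1:ℝ) else 0) ∂μ := h2
      rw [h3, hψval v]
    set Φ : Ω → ℝ := fun ω => ∑ v ∈ F,
      (∑ j, Real.sign (sg (i t ω) v j + Ginf * U t ω j) * (v j - xstar j))
      * (if x t ω = v then (1:ℝ) else 0) with hΦdef
    have hterm_int : ∀ v ∈ F, Integrable (fun ω =>
        (∑ j, Real.sign (sg (i t ω) v j + Ginf * U t ω j) * (v j - xstar j))
        * (if x t ω = v then (1:ℝ) else 0)) μ := by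
      intro v _
      refine Integrable.mono' (integrable_const (∑ j, |v j - xstar j|))
        ((((hφmeas v).comp hPmeas)).mul ((hψmeas v).comp (hxmeas t))).aestronglyMeasurable
        (Filter.Eventually.of_forall fun ω => ?_)
      rw [Real.norm_eq_abs, abs_mul]
      have b1 := ssgd_phi_bound Ginf (fun k => sg k v) (fun j => v j - xstar j) (i t ω, U t ω)
      have b2 : |if x t ω = v then (1:ℝ) else 0| ≤ 1 := by split <;> norm_num
      have b3 : (0:ℝ) ≤ ∑ j, |v j - xstar j| := Finset.sum_nonneg fun j _ => abs_nonneg _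
      calc |∑ j, Real.sign (sg (i t ω) v j + Ginf * U t ω j) * (v j - xstar j)|
            * |if x t ω = v then (1:ℝ) else 0|
          ≤ (∑ j, |v j - xstar j|) * 1 := mul_le_mul b1 b2 (abs_nonneg _) b3
        _ = ∑ j, |v j - xstar j| := mul_one _
    have hΦint : Integrable Φ μ := integrable_finset_sum F hterm_int
    have hΦval : ∫ ω, Φ ω ∂μ = ∑ v ∈ F,
        ((n:ℝ)⁻¹ * ∑ k, ∑ j, sg k v j / Ginf * (v j - xstar j)) * (μ (x t ⁻¹' {v})).toReal := by
      rw [hΦdef, integral_finset_sum F hterm_int]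
      exact Finset.sum_congr rfl fun v _ => by rw [hmul v, hIφ v]
    have hPW : ∀ ω, Φ ω
        = ∑ j, Real.sign (sg (i t ω) (x t ω) j + Ginf * U t ω j) * (x t ω j - xstar j) := by
      intro ω
      rw [hΦdef]
      simp only [mul_ite, mul_one, mul_zero]
      rw [Finset.sum_ite_eq, if_pos (hmemF ω)]
    have hdesc : ∀ ω, (∑ j, (x (t+1) ω j - xstar j)^2)
        ≤ (∑ j, (x t ω j - xstar j)^2) - 2*γ*Φ ω + γ^2 * (d:ℝ) := by
      intro ω
      rw [hPW ω]
      have hexp : ∀ j : Fin d, (x (t+1) ω j - xstar j)^2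
          = (x t ω j - xstar j)^2
            - 2*γ*(Real.sign (sg (i t ω) (x t ω) j + Ginf * U t ω j) * (x t ω j - xstar j))
            + γ^2 * (Real.sign (sg (i t ω) (x t ω) j + Ginf * U t ω j))^2 := by
        intro j
        rw [hrec t ω j]
        ring
      have hsq : (∑ j, (Real.sign (sg (i t ω) (x t ω) j + Ginf * U t ω j))^2) ≤ (d:ℝ) := by
        calc (∑ j, (Real.sign (sg (i t ω) (x t ω) j + Ginf * U t ω j))^2)
            ≤ ∑ _j : Fin d, (1:ℝ) := Finset.sum_le_sum fun j _ => ssgd_sign_sq_le _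
          _ = d := by simp
      calc (∑ j, (x (t+1) ω j - xstar j)^2)
          = (∑ j, (x t ω j - xstar j)^2)
            - 2*γ*(∑ j, Real.sign (sg (i t ω) (x t ω) j + Ginf * U t ω j) * (x t ω j - xstar j))
            + γ^2 * (∑ j, (Real.sign (sg (i t ω) (x t ω) j + Ginf * U t ω j))^2) := by
            rw [Finset.sum_congr rfl fun j _ => hexp j, Finset.sum_add_distrib,
              Finset.sum_sub_distrib, ← Finset.mul_sum, ← Finset.mul_sum]
        _ ≤ (∑ j, (x t ω j - xstar j)^2)
            - 2*γ*(∑ j, Real.sign (sg (i t ω) (x t ω) j + Ginf * U t ω j) * (x t ω j - xstar j))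
            + γ^2 * (d:ℝ) := by nlinarith [sq_nonneg γ]
    have hRHSint : Integrable (fun ω => (∑ j, (x t ω j - xstar j)^2) - 2*γ*Φ ω + γ^2 * (d:ℝ)) μ :=
      ((hDint t ht).sub (hΦint.const_mul (2*γ))).add (integrable_const _)
    have hmono := integral_mono (hDint (t+1) (by omega)) hRHSint hdesc
    have hcmul : Integrable (fun ω => 2*γ*Φ ω) μ := hΦint.const_mul (2*γ)
    have hsubint : Integrable (fun ω => (∑ j, (x t ω j - xstar j)^2) - 2*γ*Φ ω) μ :=
      (hDint t ht).sub hcmul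
    rw [integral_add hsubint (integrable_const _),
      integral_sub (hDint t ht) hcmul, integral_const_mul,
      integral_const] at hmono
    simp only [measure_univ, probReal_univ, ENNReal.toReal_one, smul_eq_mul, one_mul] at hmono
    have hfdec : ∫ ω, (f (x t ω) - f xstar) ∂μ
        = ∑ v ∈ F, (f v - f xstar) * (μ (x t ⁻¹' {v})).toReal := by
      have heqf : (fun ω => f (x t ω) - f xstar)
          = fun ω => ∑ v ∈ F, (f v - f xstar) * (if x t ω = v then (1:ℝ) else 0) := by
        funext ω
        simp only [mul_ite, mul_one, mul_zero]
        rw [Finset.sum_ite_eq, if_pos (hmemF ω)]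
      rw [heqf, integral_finset_sum _ fun v _ => ((hψint v).const_mul _)]
      exact Finset.sum_congr rfl fun v _ => by rw [integral_const_mul, hψval v]
    have hIv : ∀ v : EuclideanSpace ℝ (Fin d), (f v - f xstar)/Ginf
        ≤ (n:ℝ)⁻¹ * ∑ k, ∑ j, sg k v j / Ginf * (v j - xstar j) := by
      intro v
      have h1 : ∀ k, fs k v - fs k xstar ≤ ∑ j, sg k v j * (v j - xstar j) := by
        intro k
        have h2 := hsub k v xstar
        have h3 : ⟪sg k v, xstar - v⟫ = -∑ j, sg k v j * (v j - xstar j) := by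
          rw [hinner, ← Finset.sum_neg_distrib]
          exact Finset.sum_congr rfl fun j _ => by rw [PiLp.sub_apply]; ring
        rw [h3] at h2
        linarith
      have h4 : ∑ k, ∑ j, sg k v j / Ginf * (v j - xstar j)
          = (∑ k, ∑ j, sg k v j * (v j - xstar j)) / Ginf := by
        rw [Finset.sum_div]
        refine Finset.sum_congr rfl fun k _ => ?_
        rw [Finset.sum_div]
        exact Finset.sum_congr rfl fun j _ => by ring
      have h5 : (n:ℝ) * (f v - f xstar) ≤ ∑ k, ∑ j, sg k v j * (v j - xstar j) := by
        have h6 : ∑ k, (fs k v - fs k xstar) ≤ ∑ k, ∑ j, sg k v j * (v j - xstar j) :=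
          Finset.sum_le_sum fun k _ => h1 k
        have h7 : ∑ k, (fs k v - fs k xstar) = (n:ℝ) * (f v - f xstar) := by
          rw [hf]
          simp only
          rw [Finset.sum_sub_distrib]
          field_simp
        linarith
      rw [h4, ← mul_div_assoc]
      have hni : (n:ℝ) * (n:ℝ)⁻¹ = 1 := mul_inv_cancel₀ hnR.ne'
      have h8 : (f v - f xstar) ≤ (n:ℝ)⁻¹ * ∑ k, ∑ j, sg k v j * (v j - xstar j) := by
        have h9 := mul_le_mul_of_nonneg_left h5 (inv_pos.2 hnR).le
        calc f v - f xstar = (n:ℝ)⁻¹ * ((n:ℝ) * (f v - f xstar)) := by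
              rw [← mul_assoc, inv_mul_cancel₀ hnR.ne', one_mul]
          _ ≤ (n:ℝ)⁻¹ * ∑ k, ∑ j, sg k v j * (v j - xstar j) := h9
      exact (div_le_div_iff_of_pos_right hG).2 h8
    have hcmp : ∫ ω, (f (x t ω) - f xstar) ∂μ ≤ Ginf * ∫ ω, Φ ω ∂μ := by
      rw [hfdec, hΦval, Finset.mul_sum]
      refine Finset.sum_le_sum fun v _ => ?_
      have h9 : (0:ℝ) ≤ (μ (x t ⁻¹' {v})).toReal := ENNReal.toReal_nonneg
      have h10 := mul_le_mul_of_nonneg_right (hIv v) h9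
      have h12 := mul_le_mul_of_nonneg_left h10 hG.le
      have h13 : Ginf * ((f v - f xstar)/Ginf * (μ (x t ⁻¹' {v})).toReal)
          = (f v - f xstar) * (μ (x t ⁻¹' {v})).toReal := by
        field_simp
      rw [h13] at h12
      linarith [h12]
    have hI_le : ∫ ω, Φ ω ∂μ
        ≤ ((∫ ω, (∑ j, (x t ω j - xstar j)^2) ∂μ)
          - (∫ ω, (∑ j, (x (t+1) ω j - xstar j)^2) ∂μ) + γ^2 * (d:ℝ)) / (2*γ) := by
      rw [le_div_iff₀ (by positivity)]
      linarith [hmono]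
    calc ∫ ω, (f (x t ω) - f xstar) ∂μ
        ≤ Ginf * ∫ ω, Φ ω ∂μ := hcmp
      _ ≤ Ginf * (((∫ ω, (∑ j, (x t ω j - xstar j)^2) ∂μ)
          - (∫ ω, (∑ j, (x (t+1) ω j - xstar j)^2) ∂μ) + γ^2 * (d:ℝ)) / (2*γ)) :=
          mul_le_mul_of_nonneg_left hI_le hG.le
      _ = Ginf / (2*γ) * ((∫ ω, (∑ j, (x t ω j - xstar j)^2) ∂μ)
          - (∫ ω, (∑ j, (x (t+1) ω j - xstar j)^2) ∂μ)) + Ginf * γ * (d:ℝ) / 2 := by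
          field_simp
  -- Part 1
  have hnorm : (∑ j, (x1 j - xstar j)^2) = ‖x1 - xstar‖^2 := by
    rw [EuclideanSpace.norm_eq, Real.sq_sqrt (Finset.sum_nonneg fun j _ => sq_nonneg _)]
    refine Finset.sum_congr rfl fun j _ => ?_
    rw [Real.norm_eq_abs, sq_abs, PiLp.sub_apply]
  have he1 : (∫ ω, (∑ j, (x 1 ω j - xstar j)^2) ∂μ) = ‖x1 - xstar‖^2 := by
    have : (fun ω => (∑ j, (x 1 ω j - xstar j)^2)) = fun _ => ‖x1 - xstar‖^2 := by
      funext ω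
      rw [hx1 ω, hnorm]
    rw [this, integral_const]
    simp
  have henn : ∀ t, 0 ≤ ∫ ω, (∑ j, (x t ω j - xstar j)^2) ∂μ := by
    intro t
    exact integral_nonneg fun ω => Finset.sum_nonneg fun j _ => sq_nonneg _
  have part1 : (∑ t ∈ Finset.Icc 1 T, ∫ ω, (f (x t ω) - f xstar) ∂μ)
      ≤ Ginf / 2 * (‖x1 - xstar‖ ^ 2 / γ + γ * d * T) := by
    have htel : ∑ t ∈ Finset.Icc 1 T,
        ((∫ ω, (∑ j, (x t ω j - xstar j)^2) ∂μ)
          - (∫ ω, (∑ j, (x (t+1) ω j - xstar j)^2) ∂μ))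
        = (∫ ω, (∑ j, (x 1 ω j - xstar j)^2) ∂μ)
          - (∫ ω, (∑ j, (x (T+1) ω j - xstar j)^2) ∂μ) := by
      rw [← Finset.Ico_add_one_right_eq_Icc, Finset.sum_Ico_eq_sum_range]
      simp only [Nat.add_sub_cancel]
      have h := Finset.sum_range_sub' (fun s => ∫ ω, (∑ j, (x (1+s) ω j - xstar j)^2) ∂μ) T
      rw [Nat.add_comm 1 T] at h
      exact h
    calc (∑ t ∈ Finset.Icc 1 T, ∫ ω, (f (x t ω) - f xstar) ∂μ)
        ≤ ∑ t ∈ Finset.Icc 1 T,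
          (Ginf / (2*γ) * ((∫ ω, (∑ j, (x t ω j - xstar j)^2) ∂μ)
            - (∫ ω, (∑ j, (x (t+1) ω j - xstar j)^2) ∂μ)) + Ginf * γ * (d:ℝ) / 2) := by
          refine Finset.sum_le_sum fun t htt => hstep t ?_
          exact (Finset.mem_Icc.1 htt).1
      _ = Ginf / (2*γ) * ((∫ ω, (∑ j, (x 1 ω j - xstar j)^2) ∂μ)
            - (∫ ω, (∑ j, (x (T+1) ω j - xstar j)^2) ∂μ)) + T * (Ginf * γ * (d:ℝ) / 2) := by
          rw [Finset.sum_add_distrib, ← Finset.mul_sum, htel, Finset.sum_const, Nat.card_Icc]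
          simp [nsmul_eq_mul]
      _ ≤ Ginf / (2*γ) * ‖x1 - xstar‖^2 + T * (Ginf * γ * (d:ℝ) / 2) := by
          have h1 := henn (T+1)
          have h2 : 0 < Ginf / (2*γ) := by positivity
          rw [he1]
          nlinarith
      _ = Ginf / 2 * (‖x1 - xstar‖ ^ 2 / γ + γ * d * T) := by
          field_simp
  refine ⟨part1, ?_⟩
  -- Part 2
  intro hγeq
  have hfcont : Continuous f := by
    have habs : ∀ (z : EuclideanSpace ℝ (Fin d)) j, |z j| ≤ ‖z‖ := by
      intro z j
      rw [EuclideanSpace.norm_eq, ← Real.sqrt_sq_eq_abs]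
      apply Real.sqrt_le_sqrt
      have h1 := Finset.single_le_sum (f := fun j => ‖z j‖^2)
        (fun j _ => sq_nonneg _) (Finset.mem_univ j)
      simpa [Real.norm_eq_abs, sq_abs] using h1
    refine (LipschitzWith.of_dist_le_mul (K := Real.toNNReal (Ginf * d)) (f := f) ?_).continuous
    intro a b
    rw [Real.dist_eq, dist_eq_norm]
    calc |f a - f b| ≤ Ginf * ∑ j, |a j - b j| := hflip a b
      _ ≤ Ginf * ∑ _j : Fin d, ‖a - b‖ := by
          have h2 : ∀ j : Fin d, |a j - b j| ≤ ‖a - b‖ := by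
            intro j
            have := habs (a - b) j
            simpa [PiLp.sub_apply] using this
          have h3 := Finset.sum_le_sum fun (j : Fin d) (_ : j ∈ Finset.univ) => h2 j
          nlinarith [h3, hG]
      _ = Real.toNNReal (Ginf*d) * ‖a - b‖ := by
          rw [Finset.sum_const, Finset.card_univ, Fintype.card_fin, nsmul_eq_mul,
            Real.coe_toNNReal _ (by positivity)]
          ring
  have hdR : (0:ℝ) < d := by exact_mod_cast hd
  have hR0 : 0 < ‖x1 - xstar‖ := by
    rcases (norm_nonneg (x1 - xstar)).lt_or_eq with h | h
    · exact h
    · exfalso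
      rw [hγeq] at hγ
      rw [← h] at hγ
      rw [zero_div] at hγ
      exact lt_irrefl 0 hγ
  have hdT : (0:ℝ) < (d:ℝ) * T := mul_pos hdR hTR
  have hsq : 0 < Real.sqrt ((d:ℝ)*T) := Real.sqrt_pos.2 hdT
  have hcard : (∑ _t ∈ Finset.Icc 1 T, (T:ℝ)⁻¹) = 1 := by
    rw [Finset.sum_const, Nat.card_Icc, nsmul_eq_mul]
    simp only [Nat.add_sub_cancel]
    field_simp
  have hJ : ∀ ω, f ((T:ℝ)⁻¹ • ∑ t ∈ Finset.Icc 1 T, x t ω)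
      ≤ ∑ t ∈ Finset.Icc 1 T, (T:ℝ)⁻¹ * f (x t ω) := by
    intro ω
    have h1 := hfconv.map_sum_le (t := Finset.Icc 1 T) (w := fun _ => (T:ℝ)⁻¹)
      (p := fun t => x t ω) (fun _ _ => by positivity) hcard (fun _ _ => Set.mem_univ _)
    rw [Finset.smul_sum]
    exact h1
  have havgmeas : Measurable fun ω =>
      ((T:ℝ)⁻¹ • ∑ t ∈ Finset.Icc 1 T, x t ω : EuclideanSpace ℝ (Fin d)) := by
    refine (WithLp.measurable_toLp _ _).comp (measurable_pi_lambda (fun ω => ((T:ℝ)⁻¹ • ∑ t ∈ Finset.Icc 1 T, x t ω : EuclideanSpace ℝ (Fin d)).ofLp) fun j => ?_)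
    have heq : (fun ω => ((T:ℝ)⁻¹ • ∑ t ∈ Finset.Icc 1 T, x t ω : EuclideanSpace ℝ (Fin d)) j)
        = fun ω => (T:ℝ)⁻¹ * ∑ t ∈ Finset.Icc 1 T, x t ω j := by
      funext ω
      have hsa : (∑ t ∈ Finset.Icc 1 T, x t ω) j = ∑ t ∈ Finset.Icc 1 T, x t ω j :=
        by rw [WithLp.ofLp_sum, Finset.sum_apply]
      rw [PiLp.smul_apply, smul_eq_mul, hsa]
    rw [heq]
    exact (Finset.measurable_sum _ fun t _ =>
      (measurable_pi_apply j).comp ((WithLp.measurable_ofLp _ _).comp (hxmeas t))).const_mul _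
  have havgbd : ∀ ω (j : Fin d),
      |((T:ℝ)⁻¹ • ∑ t ∈ Finset.Icc 1 T, x t ω : EuclideanSpace ℝ (Fin d)) j - x1 j|
      ≤ γ * T := by
    intro ω j
    have h1 : ((T:ℝ)⁻¹ • ∑ t ∈ Finset.Icc 1 T, x t ω : EuclideanSpace ℝ (Fin d)) j - x1 j
        = (T:ℝ)⁻¹ * ∑ t ∈ Finset.Icc 1 T, (x t ω j - x1 j) := by
      have h2 : ((T:ℝ)⁻¹ • ∑ t ∈ Finset.Icc 1 T, x t ω : EuclideanSpace ℝ (Fin d)) j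
          = (T:ℝ)⁻¹ * ∑ t ∈ Finset.Icc 1 T, x t ω j := by
        have hsa : (∑ t ∈ Finset.Icc 1 T, x t ω) j = ∑ t ∈ Finset.Icc 1 T, x t ω j :=
          by rw [WithLp.ofLp_sum, Finset.sum_apply]
        rw [PiLp.smul_apply, smul_eq_mul, hsa]
      rw [h2, Finset.sum_sub_distrib, Finset.sum_const, Nat.card_Icc, nsmul_eq_mul]
      simp only [Nat.add_sub_cancel]
      field_simp
    rw [h1, abs_mul, abs_of_pos (inv_pos.2 hTR)]
    have h3 : |∑ t ∈ Finset.Icc 1 T, (x t ω j - x1 j)| ≤ ∑ t ∈ Finset.Icc 1 T, (γ * T) := by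
      calc |∑ t ∈ Finset.Icc 1 T, (x t ω j - x1 j)|
          ≤ ∑ t ∈ Finset.Icc 1 T, |x t ω j - x1 j| := Finset.abs_sum_le_sum_abs _ _
        _ ≤ ∑ t ∈ Finset.Icc 1 T, (γ * T) := by
            refine Finset.sum_le_sum fun t htt => ?_
            obtain ⟨ht1, ht2⟩ := Finset.mem_Icc.1 htt
            have h4 := hbd t ht1 ω j
            have h5 : ((t:ℝ) - 1) ≤ (T:ℝ) := by
              have : (t:ℝ) ≤ T := by exact_mod_cast ht2
              linarith
            nlinarith [hγ]
    rw [Finset.sum_const, Nat.card_Icc, nsmul_eq_mul] at h3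
    simp only [Nat.add_sub_cancel] at h3
    calc (T:ℝ)⁻¹ * |∑ t ∈ Finset.Icc 1 T, (x t ω j - x1 j)|
        ≤ (T:ℝ)⁻¹ * ((T:ℝ) * (γ * T)) := by
          have := inv_pos.2 hTR
          nlinarith [h3]
      _ = γ * T := by field_simp
  have hfavg_int : Integrable (fun ω =>
      f ((T:ℝ)⁻¹ • ∑ t ∈ Finset.Icc 1 T, x t ω)) μ := by
    refine Integrable.mono' (integrable_const (|f x1| + Ginf * ((d:ℝ) * (γ * T))))
      (hfcont.measurable.comp havgmeas).aestronglyMeasurable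
      (Filter.Eventually.of_forall fun ω => ?_)
    rw [Real.norm_eq_abs]
    have h1 := hflip ((T:ℝ)⁻¹ • ∑ t ∈ Finset.Icc 1 T, x t ω) x1
    have h2 : (∑ j, |((T:ℝ)⁻¹ • ∑ t ∈ Finset.Icc 1 T, x t ω : EuclideanSpace ℝ (Fin d)) j - x1 j|)
        ≤ ∑ _j : Fin d, (γ * T) := Finset.sum_le_sum fun j _ => havgbd ω j
    rw [Finset.sum_const, Finset.card_univ, Fintype.card_fin, nsmul_eq_mul] at h2
    have h4 : |f ((T:ℝ)⁻¹ • ∑ t ∈ Finset.Icc 1 T, x t ω)|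
        ≤ |f x1| + |f ((T:ℝ)⁻¹ • ∑ t ∈ Finset.Icc 1 T, x t ω) - f x1| := by
      have := abs_add_le (f x1) (f ((T:ℝ)⁻¹ • ∑ t ∈ Finset.Icc 1 T, x t ω) - f x1)
      simp only [add_sub_cancel] at this
      linarith
    nlinarith [h1, h2, h4, hG]
  have hsum_int : Integrable (fun ω => ∑ t ∈ Finset.Icc 1 T, (T:ℝ)⁻¹ * f (x t ω)) μ :=
    integrable_finset_sum _ fun t _ => (hint t).const_mul _
  have hmono2 := integral_mono hfavg_int hsum_int hJ
  rw [integral_finset_sum _ (fun t (_ : t ∈ Finset.Icc 1 T) => (hint t).const_mul ((T:ℝ)⁻¹))] at hmono2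
  simp_rw [integral_const_mul] at hmono2
  rw [← Finset.mul_sum] at hmono2
  have hS : ∑ t ∈ Finset.Icc 1 T, ∫ ω, (f (x t ω) - f xstar) ∂μ
      = (∑ t ∈ Finset.Icc 1 T, ∫ ω, f (x t ω) ∂μ) - T * f xstar := by
    have h1 : ∀ t ∈ Finset.Icc 1 T, ∫ ω, (f (x t ω) - f xstar) ∂μ
        = (∫ ω, f (x t ω) ∂μ) - f xstar := by
      intro t _
      rw [integral_sub (hint t) (integrable_const _), integral_const]
      simp
    rw [Finset.sum_congr rfl h1, Finset.sum_sub_distrib, Finset.sum_const, Nat.card_Icc,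
      nsmul_eq_mul]
    simp only [Nat.add_sub_cancel]
  have hfinal : (∫ ω, f ((T:ℝ)⁻¹ • ∑ t ∈ Finset.Icc 1 T, x t ω) ∂μ) - f xstar
      ≤ (T:ℝ)⁻¹ * ∑ t ∈ Finset.Icc 1 T, ∫ ω, (f (x t ω) - f xstar) ∂μ := by
    rw [hS]
    have h2 : (T:ℝ)⁻¹ * ((∑ t ∈ Finset.Icc 1 T, ∫ ω, f (x t ω) ∂μ) - T * f xstar)
        = (T:ℝ)⁻¹ * (∑ t ∈ Finset.Icc 1 T, ∫ ω, f (x t ω) ∂μ) - f xstar := by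
      field_simp
    rw [h2]
    linarith [hmono2]
  have hle2 : (∫ ω, f ((T:ℝ)⁻¹ • ∑ t ∈ Finset.Icc 1 T, x t ω) ∂μ) - f xstar
      ≤ (T:ℝ)⁻¹ * (Ginf / 2 * (‖x1 - xstar‖ ^ 2 / γ + γ * d * T)) :=
    le_trans hfinal (mul_le_mul_of_nonneg_left part1 (inv_pos.2 hTR).le)
  have harith : (T:ℝ)⁻¹ * (Ginf / 2 * (‖x1 - xstar‖ ^ 2 / γ + γ * d * T))
      = Ginf * ‖x1 - xstar‖ * Real.sqrt ((d:ℝ) / T) := by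
    rw [hγeq]
    have h1 : ‖x1 - xstar‖^2 / (‖x1 - xstar‖ / Real.sqrt ((d:ℝ)*T))
        = ‖x1 - xstar‖ * Real.sqrt ((d:ℝ)*T) := by
      rw [div_div_eq_mul_div, div_eq_iff hR0.ne']
      ring
    have h2 : (‖x1 - xstar‖ / Real.sqrt ((d:ℝ)*T)) * d * T
        = ‖x1 - xstar‖ * Real.sqrt ((d:ℝ)*T) := by
      rw [div_mul_eq_mul_div, div_mul_eq_mul_div, div_eq_iff hsq.ne']
      nlinarith [Real.sq_sqrt hdT.le]
    have h3 : Real.sqrt ((d:ℝ)/T) = Real.sqrt ((d:ℝ)*T) / T := by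
      rw [show (d:ℝ)/T = ((d:ℝ)*T)/(T^2) by field_simp,
        Real.sqrt_div hdT.le, Real.sqrt_sq hTR.le]
    rw [h1, h2, h3]
    field_simp
    ring
  linarith [hle2, le_of_eq harith]
end

section
/- Let f : ℝ^d → ℝ be continuously differentiable with ‖∇f(x) - ∇f(y)‖_p ≤ L_q‖x-y‖_q (1/p + 1/q = 1), and lower bounded by f_*. The deterministic sign gradient descent x_{t+1} = x_t - γ·sign(∇f(x_t)) satisfies, for any γ > 0 and T ≥ 1: (1/T)·Σ_{t=1}^T ‖∇f(x_t)‖_1 ≤ (f(x_1) - f_*)/(Tγ) + (L_q γ d^{2/q})/2. -/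
section signGDAux

variable {d : ℕ}

lemma lpNorm_nonneg' (p : ℝ) (v : Fin d → ℝ) : 0 ≤ lpNorm p v := by
  apply Real.rpow_nonneg
  exact Finset.sum_nonneg fun j _ => Real.rpow_nonneg (abs_nonneg _) _

lemma abs_le_lpNorm' {p : ℝ} (hp : 0 < p) (v : Fin d → ℝ) (j : Fin d) :
    |v j| ≤ lpNorm p v := by
  have h1 : |v j| = (|v j| ^ p) ^ (1/p) := by
    rw [← Real.rpow_mul (abs_nonneg _), mul_one_div, div_self hp.ne', Real.rpow_one]
  rw [h1]
  apply Real.rpow_le_rpow (Real.rpow_nonneg (abs_nonneg _) _) _ (by positivity)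
  exact Finset.single_le_sum (fun i _ => Real.rpow_nonneg (abs_nonneg _) _) (Finset.mem_univ j)

lemma lpNorm_le' {p M : ℝ} (hp : 0 < p) (hM : 0 ≤ M) (v : Fin d → ℝ)
    (h : ∀ j, |v j| ≤ M) : lpNorm p v ≤ (d : ℝ) ^ (1/p) * M := by
  have h1 : ∑ j, |v j| ^ p ≤ (d : ℝ) * M ^ p := by
    calc ∑ j, |v j| ^ p ≤ ∑ _j : Fin d, M ^ p :=
          Finset.sum_le_sum fun j _ => Real.rpow_le_rpow (abs_nonneg _) (h j) hp.le
      _ = (d : ℝ) * M ^ p := by simp [mul_comm]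
  calc lpNorm p v ≤ ((d : ℝ) * M ^ p) ^ (1/p) :=
        Real.rpow_le_rpow (Finset.sum_nonneg fun j _ => Real.rpow_nonneg (abs_nonneg _) _) h1
          (by positivity)
    _ = (d : ℝ) ^ (1/p) * M := by
        rw [Real.mul_rpow (by positivity) (by positivity),
          ← Real.rpow_mul hM, mul_one_div, div_self hp.ne', Real.rpow_one]

lemma lpNorm_smul' {p : ℝ} (hp : 0 < p) (t : ℝ) (v : Fin d → ℝ) :
    lpNorm p (t • v) = |t| * lpNorm p v := by
  unfold lpNorm
  have h : ∀ j : Fin d, |(t • v) j| ^ p = |t| ^ p * |v j| ^ p := by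
    intro j
    rw [Pi.smul_apply, smul_eq_mul, abs_mul, Real.mul_rpow (abs_nonneg _) (abs_nonneg _)]
  simp only [h, ← Finset.mul_sum]
  rw [Real.mul_rpow (by positivity)
      (Finset.sum_nonneg fun j _ => Real.rpow_nonneg (abs_nonneg _) _),
    ← Real.rpow_mul (abs_nonneg _), mul_one_div, div_self hp.ne', Real.rpow_one]

lemma lpNorm_one' (v : Fin d → ℝ) : lpNorm 1 v = ∑ j, |v j| := by
  simp [lpNorm]

lemma conj_of_hpq' {p q : ℝ} (hp : 1 ≤ p) (hq : 1 ≤ q) (hpq : 1 / p + 1 / q = 1) :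
    Real.HolderConjugate p q := by
  have hp0 : 0 < p := lt_of_lt_of_le one_pos hp
  have hq0 : 0 < q := lt_of_lt_of_le one_pos hq
  have h1 : 1 / p < 1 := by
    have : 0 < 1 / q := by positivity
    linarith
  rw [Real.holderConjugate_iff]
  constructor
  · rw [div_lt_one hp0] at h1; exact h1
  · rw [← one_div, ← one_div]; exact hpq

lemma holder' {p q : ℝ} (hpq : Real.HolderConjugate p q) (u v : Fin d → ℝ) :
    ∑ j, u j * v j ≤ lpNorm p u * lpNorm q v :=
  Real.inner_le_Lp_mul_Lq Finset.univ u v hpq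

lemma inner_eq_sum' (u v : EuclideanSpace ℝ (Fin d)) :
    (inner ℝ u v : ℝ) = ∑ j, u j * v j := by
  simp [PiLp.inner_apply, RCLike.inner_apply, mul_comm]

lemma self_mul_sign' (a : ℝ) : a * Real.sign a = |a| := by
  rcases lt_trichotomy a 0 with h | h | h
  · rw [Real.sign_of_neg h, abs_of_neg h]; ring
  · simp [h]
  · rw [Real.sign_of_pos h, abs_of_pos h]; ring

lemma abs_sign_le_one' (a : ℝ) : |Real.sign a| ≤ 1 := by
  rcases lt_trichotomy a 0 with h | h | h
  · rw [Real.sign_of_neg h]; norm_num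
  · simp [h]
  · rw [Real.sign_of_pos h]; norm_num

/-- Continuity of the gradient map, from Lipschitzness in the `ℓ_p/ℓ_q` norms. -/
lemma g_continuous' {p q L : ℝ} (hp : 0 < p) (hq : 0 < q) (hL : 0 < L)
    (g : EuclideanSpace ℝ (Fin d) → EuclideanSpace ℝ (Fin d))
    (hlip : ∀ x y, lpNorm p (g x - g y) ≤ L * lpNorm q (x - y)) :
    Continuous g := by
  have key : ∀ x y : EuclideanSpace ℝ (Fin d), ∀ j,
      |g x j - g y j| ≤ L * ((d : ℝ) ^ (1/q) * ‖x - y‖) := by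
    intro x y j
    have h1 : |g x j - g y j| ≤ lpNorm p (g x - g y) := by
      have := abs_le_lpNorm' hp (g x - g y) j
      simpa using this
    have h2 : lpNorm q (x - y) ≤ (d : ℝ) ^ (1/q) * ‖x - y‖ := by
      apply lpNorm_le' hq (norm_nonneg _)
      intro j'
      have hsq : ‖(x - y) j'‖^2 ≤ ∑ i, ‖(x - y) i‖^2 :=
        Finset.single_le_sum (f := fun i => ‖(x - y) i‖^2) (fun i _ => sq_nonneg _)
          (Finset.mem_univ j')
      have : |(x - y) j'| ≤ ‖x - y‖ := by
        rw [EuclideanSpace.norm_eq, ← Real.sqrt_sq_eq_abs]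
        exact Real.sqrt_le_sqrt (by simpa using hsq)
      simpa using this
    calc |g x j - g y j| ≤ L * lpNorm q (x - y) := h1.trans (hlip x y)
      _ ≤ L * ((d : ℝ) ^ (1/q) * ‖x - y‖) := by
          exact mul_le_mul_of_nonneg_left h2 hL.le
  have : ∀ j : Fin d, Continuous fun x => g x j := by
    intro j
    set C : ℝ := L * (d : ℝ) ^ (1/q) with hC
    have hC0 : 0 ≤ C := by positivity
    apply LipschitzWith.continuous (K := Real.toNNReal C)
    apply LipschitzWith.of_dist_le_mul
    intro x y
    rw [Real.dist_eq, dist_eq_norm, Real.coe_toNNReal _ hC0]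
    calc |g x j - g y j| ≤ L * ((d : ℝ) ^ (1/q) * ‖x - y‖) := key x y j
      _ = C * ‖x - y‖ := by ring
  exact (PiLp.continuous_toLp 2 _).comp (continuous_pi this)

/-- The descent lemma in `ℓ_q` norm. -/
lemma descent_lemma' {p q L : ℝ} (hp : 1 ≤ p) (hq : 1 ≤ q) (hpq : 1 / p + 1 / q = 1)
    (hL : 0 < L)
    (f : EuclideanSpace ℝ (Fin d) → ℝ)
    (g : EuclideanSpace ℝ (Fin d) → EuclideanSpace ℝ (Fin d))
    (hdiff : ∀ x, HasGradientAt f (g x) x)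
    (hlip : ∀ x y, lpNorm p (g x - g y) ≤ L * lpNorm q (x - y))
    (x v : EuclideanSpace ℝ (Fin d)) :
    f (x + v) ≤ f x + (inner ℝ (g x) v : ℝ) + L / 2 * (lpNorm q v)^2 := by
  have hp0 : 0 < p := lt_of_lt_of_le one_pos hp
  have hq0 : 0 < q := lt_of_lt_of_le one_pos hq
  have hconj := conj_of_hpq' hp hq hpq
  set h : ℝ → ℝ := fun t => (inner ℝ (g (x + t • v)) v : ℝ) with hh
  have hcg : Continuous g := g_continuous' hp0 hq0 hL g hlip
  have hcont : Continuous h := by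
    apply Continuous.inner
    · exact hcg.comp (continuous_const.add (continuous_id.smul continuous_const))
    · exact continuous_const
  have hderiv : ∀ t ∈ Set.uIcc (0:ℝ) 1, HasDerivAt (fun s : ℝ => f (x + s • v)) (h t) t := by
    intro t _
    have hc : HasDerivAt (fun s : ℝ => x + s • v) v t := by
      simpa using ((hasDerivAt_id t).smul_const v).const_add x
    have hF := (hdiff (x + t • v)).hasFDerivAt
    have := hF.comp_hasDerivAt t hc
    simp only [InnerProductSpace.toDual_apply_apply] at this
    exact this
  have hFTC : ∫ t in (0:ℝ)..1, h t = f (x + v) - f x := by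
    have := intervalIntegral.integral_eq_sub_of_hasDerivAt hderiv
      (hcont.intervalIntegrable 0 1)
    simpa using this
  -- pointwise bound on [0,1]
  have hbound : ∀ t ∈ Set.Icc (0:ℝ) 1,
      h t ≤ (inner ℝ (g x) v : ℝ) + L * (lpNorm q v)^2 * t := by
    intro t ht
    have hdiffsum : h t - (inner ℝ (g x) v : ℝ) = ∑ j, (g (x + t • v) - g x) j * v j := by
      rw [hh]
      simp only [inner_eq_sum', ← Finset.sum_sub_distrib]
      congr 1
      ext j
      simp [sub_mul]
    have hHolder : ∑ j, (g (x + t • v) - g x) j * v j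
        ≤ lpNorm p (g (x + t • v) - g x) * lpNorm q v := holder' hconj _ _
    have hLip : lpNorm p (g (x + t • v) - g x) ≤ L * (t * lpNorm q v) := by
      have := hlip (x + t • v) x
      have harg : (x + t • v) - x = t • v := by abel
      rw [harg] at this
      have hsmul : lpNorm q (t • v) = |t| * lpNorm q v := lpNorm_smul' hq0 t v
      rw [hsmul, abs_of_nonneg ht.1] at this
      linarith [this]
    have : h t - (inner ℝ (g x) v : ℝ) ≤ L * (t * lpNorm q v) * lpNorm q v := by
      rw [hdiffsum]
      exact hHolder.trans (mul_le_mul_of_nonneg_right hLip (lpNorm_nonneg' q v))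
    nlinarith [this]
  have hint : ∫ t in (0:ℝ)..1, h t
      ≤ ∫ t in (0:ℝ)..1, ((inner ℝ (g x) v : ℝ) + L * (lpNorm q v)^2 * t) := by
    apply intervalIntegral.integral_mono_on zero_le_one
      (hcont.intervalIntegrable 0 1)
      ((continuous_const.add (continuous_const.mul continuous_id')).intervalIntegrable 0 1)
    exact hbound
  have hrhs : ∫ t in (0:ℝ)..1, ((inner ℝ (g x) v : ℝ) + L * (lpNorm q v)^2 * t)
      = (inner ℝ (g x) v : ℝ) + L / 2 * (lpNorm q v)^2 := by
    rw [intervalIntegral.integral_add (g := fun t : ℝ => L * (lpNorm q v)^2 * t) (intervalIntegrable_const)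
      ((continuous_const.mul continuous_id').intervalIntegrable 0 1)]
    simp only [intervalIntegral.integral_const, smul_eq_mul]
    rw [intervalIntegral.integral_const_mul]
    have : ∫ t in (0:ℝ)..1, t = 1/2 := by
      rw [integral_id]; norm_num
    rw [this]; ring
  rw [hFTC] at hint
  rw [hrhs] at hint
  linarith

end signGDAux

/-- Averaged gradient bound for deterministic sign gradient descent
`x_{t+1} = x_t - γ sign(∇f(x_t))` on an `L_q`-smooth function lower bounded by `fstar`:
`(1/T) Σ_{t=1}^T ‖∇f(x_t)‖₁ ≤ (f(x_1) - fstar)/(Tγ) + L_q γ d^{2/q} / 2`. -/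
theorem signGD_average_grad_bound {d : ℕ} (p q L γ : ℝ) (hp : 1 ≤ p) (hq : 1 ≤ q)
    (hpq : 1 / p + 1 / q = 1) (hL : 0 < L) (hγ : 0 < γ)
    (f : EuclideanSpace ℝ (Fin d) → ℝ)
    (g : EuclideanSpace ℝ (Fin d) → EuclideanSpace ℝ (Fin d))
    (hdiff : ∀ x, HasGradientAt f (g x) x)
    (hlip : ∀ x y, lpNorm p (g x - g y) ≤ L * lpNorm q (x - y))
    (fstar : ℝ) (hlb : ∀ x, fstar ≤ f x)
    (x : ℕ → EuclideanSpace ℝ (Fin d))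
    (hrec : ∀ t j, x (t + 1) j = x t j - γ * Real.sign (g (x t) j))
    (T : ℕ) (hT : 1 ≤ T) :
    (1 / T : ℝ) * ∑ t ∈ Finset.Icc 1 T, lpNorm 1 (g (x t))
      ≤ (f (x 1) - fstar) / (T * γ) + L * γ * (d : ℝ) ^ (2 / q) / 2 := by
  have hq0 : 0 < q := lt_of_lt_of_le one_pos hq
  set D : ℝ := (d : ℝ) ^ (2 / q) with hD
  set C : ℝ := L / 2 * (γ ^ 2 * D) with hC
  have hD0 : 0 ≤ D := Real.rpow_nonneg (Nat.cast_nonneg d) _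
  have hC0 : 0 ≤ C := by positivity
  -- per-step descent
  have step : ∀ t : ℕ, f (x (t + 1)) ≤ f (x t) - γ * lpNorm 1 (g (x t)) + C := by
    intro t
    set v : EuclideanSpace ℝ (Fin d) := x (t + 1) - x t with hv
    have hxv : x (t + 1) = x t + v := by rw [hv]; abel
    have hvj : ∀ j, v j = -(γ * Real.sign (g (x t) j)) := by
      intro j
      have := hrec t j
      simp only [hv]
      simp only [PiLp.sub_apply]
      rw [this]; ring
    -- inner product identity
    have hinner : (inner ℝ (g (x t)) v : ℝ) = -(γ * lpNorm 1 (g (x t))) := by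
      rw [inner_eq_sum', lpNorm_one']
      have : ∀ j, g (x t) j * v j = -(γ * |g (x t) j|) := by
        intro j
        rw [hvj j, ← self_mul_sign' (g (x t) j)]
        ring
      simp only [this, Finset.sum_neg_distrib, ← Finset.mul_sum]
    -- norm bound on the step
    have hvnorm : lpNorm q v ≤ (d : ℝ) ^ (1/q) * γ := by
      apply lpNorm_le' hq0 hγ.le
      intro j
      rw [hvj j, abs_neg, abs_mul, abs_of_pos hγ]
      calc γ * |Real.sign (g (x t) j)| ≤ γ * 1 :=
            mul_le_mul_of_nonneg_left (abs_sign_le_one' _) hγ.le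
        _ = γ := mul_one γ
    have hvsq : (lpNorm q v) ^ 2 ≤ γ ^ 2 * D := by
      have h1 : (lpNorm q v) ^ 2 ≤ ((d : ℝ) ^ (1/q) * γ) ^ 2 := by
        apply pow_le_pow_left₀ (lpNorm_nonneg' q v) hvnorm
      calc (lpNorm q v) ^ 2 ≤ ((d : ℝ) ^ (1/q) * γ) ^ 2 := h1
        _ = γ ^ 2 * D := by
            rw [mul_pow, ← Real.rpow_natCast ((d:ℝ) ^ (1/q)) 2,
              ← Real.rpow_mul (Nat.cast_nonneg d)]
            rw [hD]
            norm_num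
            ring_nf
    have hdesc := descent_lemma' hp hq hpq hL f g hdiff hlip (x t) v
    rw [← hxv, hinner] at hdesc
    have : L / 2 * (lpNorm q v) ^ 2 ≤ C := by
      rw [hC]
      exact mul_le_mul_of_nonneg_left hvsq (by linarith)
    linarith
  -- telescoping sum
  have tele : ∀ n : ℕ, ∑ t ∈ Finset.Icc 1 n, (f (x t) - f (x (t + 1)))
      = f (x 1) - f (x (n + 1)) := by
    intro n
    induction n with
    | zero => simp
    | succ n ih =>
      rw [Finset.sum_Icc_succ_top (Nat.one_le_iff_ne_zero.mpr (Nat.succ_ne_zero n)), ih]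
      ring
  set S : ℝ := ∑ t ∈ Finset.Icc 1 T, lpNorm 1 (g (x t)) with hS
  have key : γ * S ≤ (f (x 1) - fstar) + T * C := by
    have h1 : ∑ t ∈ Finset.Icc 1 T, (γ * lpNorm 1 (g (x t)))
        ≤ ∑ t ∈ Finset.Icc 1 T, ((f (x t) - f (x (t + 1))) + C) := by
      apply Finset.sum_le_sum
      intro t _
      have := step t
      linarith
    rw [Finset.sum_add_distrib, tele T, ← Finset.mul_sum] at h1
    have hcard : (Finset.Icc 1 T).card = T := by
      rw [Nat.card_Icc]; omega
    rw [Finset.sum_const, hcard] at h1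
    have hfl := hlb (x (T + 1))
    have : (T : ℝ) * C = T • C := by simp
    rw [hS]
    simp only [nsmul_eq_mul] at h1
    linarith
  -- final algebra
  have hT0 : (0 : ℝ) < T := by exact_mod_cast Nat.lt_of_lt_of_le Nat.zero_lt_one hT
  have hTγ : (0 : ℝ) < T * γ := mul_pos hT0 hγ
  have h2 : (1 / T : ℝ) * S = (γ * S) / (T * γ) := by
    field_simp
  have h3 : (f (x 1) - fstar) / (T * γ) + L * γ * D / 2
      = ((f (x 1) - fstar) + T * C) / (T * γ) := by
    rw [hC]
    field_simp
  rw [h2, h3]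
  exact div_le_div_of_nonneg_right key hTγ.le
end
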